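/- arXiv:2011.01521 — 2 statements merged into one kernel-verified Lean document; each statement's English description precedes it below -/
import Mathlib

section
/- Let p, q > 1 and set r = (p+q-2)/p. There exists a constant C(p,q) > 0 such that for all real numbers a > b > 0: (a-b)^{p-1}·(a^{q-1} - b^{q-1}) ≥ C(p,q)·|a^r - b^r|^p. -/
/-!
Since `a ^ r - b ^ r = r ∫_b^a x ^ (r - 1) dx` and `(r - 1) p = q - 2`, Jensen's inequality for
`t ↦ t ^ p` applied to the average of `x ^ (r - 1)` over `[b, a]` gives
`((a ^ r - b ^ r) / r) ^ p ≤ (a - b) ^ (p - 1) (a ^ (q - 1) - b ^ (q - 1)) / (q - 1)`,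
i.e. the inequality with `C = (q - 1) / r ^ p`.
-/

open Real Set MeasureTheory intervalIntegral Interval

theorem interval_average_rpow_le {f : ℝ → ℝ} {p a b : ℝ} (hp : 1 ≤ p) (hab : a < b)
    (hf : ContinuousOn f (Icc a b)) (hf0 : ∀ x ∈ Ioc a b, 0 ≤ f x) :
    (⨍ x in a..b, f x) ^ p ≤ ⨍ x in a..b, f x ^ p := by
  have hp0 : 0 ≤ p := zero_le_one.trans hp
  rw [uIoc_of_le hab.le]
  exact (convexOn_rpow hp).map_set_average_le
    (continuous_id.rpow_const fun _ ↦ Or.inr hp0).continuousOn isClosed_Ici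
    (by simp [hab]) (by simp) ((ae_restrict_iff' measurableSet_Ioc).2 (.of_forall hf0))
    (hf.integrableOn_Icc.mono_set Ioc_subset_Icc_self)
    ((hf.rpow_const fun _ _ ↦ Or.inr hp0).integrableOn_Icc.mono_set Ioc_subset_Icc_self)

theorem integral_rpow_sub_one_of_pos {r a b : ℝ} (hr : r ≠ 0) (ha : 0 < a) (hab : a ≤ b) :
    ∫ x in a..b, x ^ (r - 1) = (b ^ r - a ^ r) / r := by
  have h0 : (0 : ℝ) ∉ [[a, b]] := by
    rw [uIcc_of_le hab]
    exact fun h ↦ ha.not_ge h.1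
  rw [integral_rpow (.inr ⟨by simpa [sub_eq_add_neg] using hr, h0⟩), sub_add_cancel]

theorem rpow_sub_rpow_div_rpow_le {p r s a b : ℝ} (hp : 1 ≤ p) (hr : r ≠ 0) (hs : s ≠ 0)
    (hrs : (r - 1) * p = s - 1) (hb : 0 < b) (hab : b < a) :
    ((a ^ r - b ^ r) / r) ^ p ≤ (a - b) ^ (p - 1) * ((a ^ s - b ^ s) / s) := by
  have hab' : 0 < a - b := sub_pos.2 hab
  have hjensen := interval_average_rpow_le (f := fun x ↦ x ^ (r - 1)) hp hab
    (continuousOn_id.rpow_const fun x hx ↦ Or.inl (hb.trans_le hx.1).ne')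
    (fun x hx ↦ rpow_nonneg (hb.trans hx.1).le _)
  have hI : 0 ≤ (a ^ r - b ^ r) / r := by
    rw [← integral_rpow_sub_one_of_pos hr hb hab.le]
    exact integral_nonneg hab.le fun x hx ↦ rpow_nonneg (hb.trans_le hx.1).le _
  have hpow : ∫ x in b..a, (x ^ (r - 1)) ^ p = ∫ x in b..a, x ^ (s - 1) :=
    integral_congr fun x hx ↦ by
      rw [← rpow_mul (hb.trans_le (uIcc_of_le hab.le ▸ hx).1).le, hrs]
  rw [interval_average_eq_div, interval_average_eq_div, hpow,
    integral_rpow_sub_one_of_pos hr hb hab.le, integral_rpow_sub_one_of_pos hs hb hab.le,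
    div_rpow hI hab'.le, div_le_div_iff₀ (by positivity) hab'] at hjensen
  rw [rpow_sub_one hab'.ne', div_mul_eq_mul_div, le_div_iff₀ hab']
  linarith

/-- For `p, q > 1` and `r = (p+q-2)/p`, there exists `C(p,q) > 0` such that
for all `a > b > 0`: `(a-b)^{p-1}(a^{q-1} - b^{q-1}) ≥ C |a^r - b^r|^p`. -/
theorem numerical_inequality (p q : ℝ) (hp : 1 < p) (hq : 1 < q) :
    ∃ C : ℝ, 0 < C ∧ ∀ a b : ℝ, 0 < b → b < a →
      (a - b) ^ (p - 1) * (a ^ (q - 1) - b ^ (q - 1)) ≥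
        C * |a ^ ((p + q - 2) / p) - b ^ ((p + q - 2) / p)| ^ p := by
  set r := (p + q - 2) / p
  have hq1 : 0 < q - 1 := by linarith
  have hr : 0 < r := div_pos (by linarith) (by linarith)
  have hrq : (r - 1) * p = q - 1 - 1 := by
    simp only [r]
    field_simp
    ring
  refine ⟨(q - 1) / r ^ p, div_pos hq1 (rpow_pos_of_pos hr p), fun a b hb hab ↦ ?_⟩
  have hpos : 0 < a ^ r - b ^ r := sub_pos.2 (rpow_lt_rpow hb.le hab hr)
  have key := rpow_sub_rpow_div_rpow_le hp.le hr.ne' hq1.ne' hrq hb hab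
  rw [div_rpow hpos.le hr.le] at key
  calc (q - 1) / r ^ p * |a ^ r - b ^ r| ^ p
      = (q - 1) * ((a ^ r - b ^ r) ^ p / r ^ p) := by rw [abs_of_pos hpos]; ring
    _ ≤ (q - 1) * ((a - b) ^ (p - 1) * ((a ^ (q - 1) - b ^ (q - 1)) / (q - 1))) := by
      gcongr
    _ = (a - b) ^ (p - 1) * (a ^ (q - 1) - b ^ (q - 1)) := by field_simp
end

section
/- Let p, q > 1 and r = (p+q-2)/p. There exists C(p,q) > 0 such that for all a, b₁ > 0: (a+b₁)^{p-1}·(a^{q-1} + b₁^{q-1}) ≥ C(p,q)·(a^r + b₁^r)^p. -/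
/-! Both sides are comparable to `m ^ (p + q - 2)` with `m = max a b₁`: the left side is at least
`m ^ (p - 1) * m ^ (q - 1)`, while `a ^ r + b₁ ^ r ≤ 2 * m ^ r` and `(m ^ r) ^ p = m ^ (p + q - 2)`.
Hence `C = (1 / 2) ^ p` works. -/

namespace Real

variable {x y : ℝ}

lemma max_rpow_le_rpow_add_rpow (hx : 0 ≤ x) (hy : 0 ≤ y) (s : ℝ) :
    max x y ^ s ≤ x ^ s + y ^ s := by
  rcases le_total x y with hxy | hxy
  · rw [max_eq_right hxy]
    linarith [rpow_nonneg hx s]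
  · rw [max_eq_left hxy]
    linarith [rpow_nonneg hy s]

lemma max_rpow_le_add_rpow (hx : 0 ≤ x) (hy : 0 ≤ y) {s : ℝ} (hs : 0 ≤ s) :
    max x y ^ s ≤ (x + y) ^ s :=
  rpow_le_rpow (le_max_of_le_left hx) (max_le (by linarith) (by linarith)) hs

lemma rpow_add_rpow_le_two_mul_max_rpow (hx : 0 ≤ x) (hy : 0 ≤ y) {s : ℝ} (hs : 0 ≤ s) :
    x ^ s + y ^ s ≤ 2 * max x y ^ s := by
  rw [rpow_max hx hy hs]
  linarith [le_max_left (x ^ s) (y ^ s), le_max_right (x ^ s) (y ^ s)]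

end Real

open Real

/-- For `p, q > 1` and `r = (p+q-2)/p`, there exists `C(p,q) > 0` such that
for all `a, b₁ > 0`: `(a+b₁)^{p-1}(a^{q-1} + b₁^{q-1}) ≥ C (a^r + b₁^r)^p`. -/
theorem numerical_inequality_signed (p q : ℝ) (hp : 1 < p) (hq : 1 < q) :
    ∃ C : ℝ, 0 < C ∧ ∀ a b₁ : ℝ, 0 < a → 0 < b₁ →
      (a + b₁) ^ (p - 1) * (a ^ (q - 1) + b₁ ^ (q - 1)) ≥
        C * (a ^ ((p + q - 2) / p) + b₁ ^ ((p + q - 2) / p)) ^ p := by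
  refine ⟨(1 / 2) ^ p, by positivity, fun a b₁ ha hb => ?_⟩
  set r := (p + q - 2) / p
  set m := max a b₁
  have hm : 0 ≤ m := le_max_of_le_left ha.le
  have hr : 0 ≤ r := div_nonneg (by linarith) (by linarith)
  calc (1 / 2) ^ p * (a ^ r + b₁ ^ r) ^ p
      = ((a ^ r + b₁ ^ r) / 2) ^ p := by
        rw [← mul_rpow (by norm_num) (by positivity)]
        ring_nf
    _ ≤ (m ^ r) ^ p := by
        gcongr
        linarith [rpow_add_rpow_le_two_mul_max_rpow ha.le hb.le hr]
    _ = m ^ (p - 1) * m ^ (q - 1) := by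
        rw [← rpow_mul hm, ← rpow_add' hm (by linarith), div_mul_cancel₀ _ (by linarith)]
        ring_nf
    _ ≤ (a + b₁) ^ (p - 1) * (a ^ (q - 1) + b₁ ^ (q - 1)) := by
        gcongr ?_ * ?_
        · exact max_rpow_le_add_rpow ha.le hb.le (by linarith)
        · exact max_rpow_le_rpow_add_rpow ha.le hb.le _
end
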